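/- Let G₀ be the cdf of the uniform distribution on [1/4, 3/4]. For every cdf G of a probability distribution on [0,1] with G ≠ G₀, we have I(G) > I(G₀) = 5/24, where I(G) = ∫₀¹ ∫₀ˣ (1 - G(x) + G(y))² dy dx. In other words, the uniform distribution on [1/4,3/4] is the unique minimizer of I over cdfs on [0,1]. -/

import Mathlib

/-!
Write `H = G - G₀` and `a(x, y) = 1 - G₀ x + G₀ y`. Expanding the square gives
`I(G) = I(G₀) + 2 ∫∫ a (H y - H x) + ∫∫ (H y - H x)²`, and Fubini on the triangle `0 < y ≤ x ≤ 1`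
turns the linear term into `∫₀¹ H(t) w(t) dt`, where
`w(t) = ∫ₜ¹ a(x, t) dx - ∫₀ᵗ a(t, y) dy = 1/2 - 2t + G₀ t`.
The weight `w` vanishes on `[1/4, 3/4]`, is positive to its left, where `H = G ≥ 0`, and negative
to its right, where `H = G - 1 ≤ 0`; so both correction terms are nonnegative.

If `G ≠ G₀` somewhere in `[0, 1]`, then either `H w ≠ 0` at a point of `[0, 1)`, hence by right
continuity on an interval, and the linear term is positive; or `H = 0` on `(3/4, 1)` while
`H(t) ≠ 0` for some `t ≤ 3/4`, and then `∫₀ˣ (H y - H x)² dy = ∫₀ˣ H² > 0` for all `x ∈ (3/4, 1)`,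
so the quadratic term is positive.
-/

open MeasureTheory Set

/-- The cdf of the uniform distribution on `[1/4, 3/4]`. -/
noncomputable def G₀ (x : ℝ) : ℝ := max 0 (min 1 (2 * x - 1/2))

noncomputable def inversionFunctional (G : ℝ → ℝ) : ℝ :=
  ∫ x in (0:ℝ)..1, ∫ y in (0:ℝ)..x, (1 - G x + G y) ^ 2

noncomputable def inversionWeight (F : ℝ → ℝ) (t : ℝ) : ℝ :=
  1 - 2 * t + F t - ∫ s in (0:ℝ)..1, F s

def triangle : Set (ℝ × ℝ) := {p | 0 < p.2 ∧ p.2 ≤ p.1 ∧ p.1 ≤ 1}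

namespace triangle

lemma measurableSet : MeasurableSet triangle :=
  (measurableSet_lt measurable_const measurable_snd).inter
    ((measurableSet_le measurable_snd measurable_fst).inter
      (measurableSet_le measurable_fst measurable_const))

lemma volume_lt_top : volume triangle < ⊤ :=
  ((isCompact_Icc.prod isCompact_Icc).measure_lt_top (μ := volume)).trans_le' <|
    measure_mono fun _ ⟨h0, hyx, hx1⟩ => ⟨⟨h0.le.trans hyx, hx1⟩, ⟨h0.le, hyx.trans hx1⟩⟩

lemma integrableOn_of_bound {f : ℝ × ℝ → ℝ} (hf : Measurable f) {C : ℝ} (hC : ∀ p, |f p| ≤ C) :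
    IntegrableOn f triangle :=
  IntegrableOn.of_bound volume_lt_top hf.aestronglyMeasurable C (ae_of_all _ hC)

lemma integral_indicator_left (f : ℝ × ℝ → ℝ) (x : ℝ) :
    ∫ y, triangle.indicator f (x, y) =
      (Ioc 0 1).indicator (fun x => ∫ y in (0:ℝ)..x, f (x, y)) x := by
  by_cases hx : x ∈ Ioc (0:ℝ) 1
  · rw [indicator_of_mem hx, intervalIntegral.integral_of_le hx.1.le,
      ← integral_indicator measurableSet_Ioc]
    congr 1 with y
    simp only [indicator, triangle, mem_ofPred_eq, mem_Ioc, hx.2, and_true]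
  · rw [indicator_of_notMem hx]
    refine integral_eq_zero_of_ae (ae_of_all _ fun y => indicator_of_notMem (fun h => hx ?_) _)
    exact ⟨h.1.trans_le h.2.1, h.2.2⟩

lemma integral_indicator_right (f : ℝ × ℝ → ℝ) (y : ℝ) :
    ∫ x, triangle.indicator f (x, y) =
      (Ioc 0 1).indicator (fun y => ∫ x in y..1, f (x, y)) y := by
  by_cases hy : y ∈ Ioc (0:ℝ) 1
  · rw [indicator_of_mem hy, intervalIntegral.integral_of_le hy.2,
      ← integral_Icc_eq_integral_Ioc, ← integral_indicator measurableSet_Icc]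
    congr 1 with x
    simp only [indicator, triangle, mem_ofPred_eq, mem_Icc, hy.1, true_and]
  · rw [indicator_of_notMem hy]
    refine integral_eq_zero_of_ae (ae_of_all _ fun x => indicator_of_notMem (fun h => hy ?_) _)
    exact ⟨h.1, h.2.1.trans h.2.2⟩

variable {f : ℝ × ℝ → ℝ}

theorem setIntegral_eq_integral_integral (hf : IntegrableOn f triangle) :
    ∫ p in triangle, f p = ∫ x in (0:ℝ)..1, ∫ y in (0:ℝ)..x, f (x, y) := by
  rw [← integral_indicator measurableSet, Measure.volume_eq_prod,
    integral_prod _ ((integrable_indicator_iff measurableSet).2 hf)]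
  simp_rw [integral_indicator_left]
  rw [integral_indicator measurableSet_Ioc, intervalIntegral.integral_of_le zero_le_one]

theorem setIntegral_eq_integral_integral_swap (hf : IntegrableOn f triangle) :
    ∫ p in triangle, f p = ∫ y in (0:ℝ)..1, ∫ x in y..1, f (x, y) := by
  rw [← integral_indicator measurableSet, Measure.volume_eq_prod,
    integral_prod_symm _ ((integrable_indicator_iff measurableSet).2 hf)]
  simp_rw [integral_indicator_right]
  rw [integral_indicator measurableSet_Ioc, intervalIntegral.integral_of_le zero_le_one]

theorem intervalIntegrable_integral (hf : IntegrableOn f triangle) :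
    IntervalIntegrable (fun x => ∫ y in (0:ℝ)..x, f (x, y)) volume 0 1 := by
  have h := ((integrable_indicator_iff measurableSet).2 hf).integral_prod_left
  simp_rw [integral_indicator_left] at h
  exact (intervalIntegrable_iff_integrableOn_Ioc_of_le zero_le_one).2
    ((integrable_indicator_iff measurableSet_Ioc).1 h)

theorem intervalIntegrable_integral_swap (hf : IntegrableOn f triangle) :
    IntervalIntegrable (fun y => ∫ x in y..1, f (x, y)) volume 0 1 := by
  have h := ((integrable_indicator_iff measurableSet).2 hf).integral_prod_right
  simp_rw [integral_indicator_right] at h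
  exact (intervalIntegrable_iff_integrableOn_Ioc_of_le zero_le_one).2
    ((integrable_indicator_iff measurableSet_Ioc).1 h)

end triangle

section Expansion

variable {F G H : ℝ → ℝ}

lemma abs_one_sub_add_le_two {u v : ℝ} (hu : u ∈ Icc (0:ℝ) 1) (hv : v ∈ Icc (0:ℝ) 1) :
    |1 - u + v| ≤ 2 :=
  abs_le.2 ⟨by linarith [hu.2, hv.1], by linarith [hu.1, hv.2]⟩

lemma abs_sub_le_two (hH : ∀ x, |H x| ≤ 1) (x y : ℝ) : |H y - H x| ≤ 2 :=
  (abs_sub _ _).trans (by linarith [hH x, hH y])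

lemma abs_sub_sq_le_four (hH : ∀ x, |H x| ≤ 1) (x y : ℝ) : |(H y - H x) ^ 2| ≤ 2 ^ 2 := by
  rw [abs_pow]
  exact pow_le_pow_left₀ (abs_nonneg _) (abs_sub_le_two hH x y) 2

lemma integrableOn_triangle_sub_sq (hH : Measurable H) (hH1 : ∀ x, |H x| ≤ 1) :
    IntegrableOn (fun p : ℝ × ℝ => (H p.2 - H p.1) ^ 2) triangle :=
  triangle.integrableOn_of_bound (by fun_prop) fun p => abs_sub_sq_le_four hH1 p.1 p.2

lemma integral_sub_integral_eq_inversionWeight (hF : ∀ a b, IntervalIntegrable F volume a b)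
    (t : ℝ) :
    (∫ x in t..1, (1 - F x + F t)) - ∫ y in (0:ℝ)..t, (1 - F t + F y) = inversionWeight F t := by
  have h₁ : ∫ x in t..1, (1 - F x + F t) = (1 - t) * (1 + F t) - ∫ x in t..1, F x := by
    simp_rw [show ∀ x, 1 - F x + F t = (1 + F t) - F x from fun x => by ring]
    rw [intervalIntegral.integral_sub intervalIntegrable_const (hF t 1),
      intervalIntegral.integral_const, smul_eq_mul]
  have h₂ : ∫ y in (0:ℝ)..t, (1 - F t + F y) = t * (1 - F t) + ∫ y in (0:ℝ)..t, F y := by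
    rw [intervalIntegral.integral_add intervalIntegrable_const (hF 0 t),
      intervalIntegral.integral_const, smul_eq_mul, sub_zero]
  rw [h₁, h₂, inversionWeight, ← intervalIntegral.integral_add_adjacent_intervals (hF 0 t) (hF t 1)]
  ring

lemma setIntegral_triangle_mul_sub (hF : Monotone F) (hF01 : ∀ x, F x ∈ Icc (0:ℝ) 1)
    (hH : Measurable H) (hH1 : ∀ x, |H x| ≤ 1) :
    ∫ p in triangle, (1 - F p.1 + F p.2) * (H p.2 - H p.1) =
      ∫ t in (0:ℝ)..1, H t * inversionWeight F t := by
  have hFm := hF.measurable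
  have hbound (p : ℝ × ℝ) (z : ℝ) (hz : |z| ≤ 1) : |(1 - F p.1 + F p.2) * z| ≤ 2 * 1 := by
    rw [abs_mul]
    exact mul_le_mul (abs_one_sub_add_le_two (hF01 _) (hF01 _)) hz (abs_nonneg _) zero_le_two
  have h₂ : IntegrableOn (fun p : ℝ × ℝ => (1 - F p.1 + F p.2) * H p.2) triangle :=
    triangle.integrableOn_of_bound (by fun_prop) fun p => hbound p _ (hH1 _)
  have h₁ : IntegrableOn (fun p : ℝ × ℝ => (1 - F p.1 + F p.2) * H p.1) triangle :=
    triangle.integrableOn_of_bound (by fun_prop) fun p => hbound p _ (hH1 _)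
  calc ∫ p in triangle, (1 - F p.1 + F p.2) * (H p.2 - H p.1)
      = (∫ p in triangle, (1 - F p.1 + F p.2) * H p.2) -
          ∫ p in triangle, (1 - F p.1 + F p.2) * H p.1 := by
        rw [← integral_sub h₂ h₁]; simp_rw [mul_sub]
    _ = ∫ t in (0:ℝ)..1, ((∫ x in t..1, (1 - F x + F t) * H t) -
          ∫ y in (0:ℝ)..t, (1 - F t + F y) * H t) := by
        rw [triangle.setIntegral_eq_integral_integral_swap h₂,
          triangle.setIntegral_eq_integral_integral h₁,
          intervalIntegral.integral_sub (triangle.intervalIntegrable_integral_swap h₂)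
            (triangle.intervalIntegrable_integral h₁)]
    _ = _ := by
        refine intervalIntegral.integral_congr fun t _ => ?_
        simp only [intervalIntegral.integral_mul_const, ← sub_mul,
          integral_sub_integral_eq_inversionWeight (fun _ _ => hF.intervalIntegrable) t]
        ring

theorem inversionFunctional_eq_add (hF : Monotone F) (hG : Monotone G)
    (hF01 : ∀ x, F x ∈ Icc (0:ℝ) 1) (hG01 : ∀ x, G x ∈ Icc (0:ℝ) 1) :
    inversionFunctional G = inversionFunctional F
      + 2 * (∫ t in (0:ℝ)..1, (G t - F t) * inversionWeight F t)
      + ∫ x in (0:ℝ)..1, ∫ y in (0:ℝ)..x, ((G y - F y) - (G x - F x)) ^ 2 := by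
  set H := fun t => G t - F t with hH_def
  have hFm := hF.measurable
  have hH : Measurable H := hG.measurable.sub hFm
  have hH1 (x : ℝ) : |H x| ≤ 1 :=
    abs_le.2 ⟨by linarith [(hF01 x).2, (hG01 x).1], by linarith [(hF01 x).1, (hG01 x).2]⟩
  have iA : IntegrableOn (fun p : ℝ × ℝ => (1 - F p.1 + F p.2) ^ 2) triangle :=
    triangle.integrableOn_of_bound (by fun_prop) (C := 2 ^ 2) fun p => by
      rw [abs_pow]
      exact pow_le_pow_left₀ (abs_nonneg _) (abs_one_sub_add_le_two (hF01 _) (hF01 _)) 2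
  have iB : IntegrableOn (fun p : ℝ × ℝ => (1 - F p.1 + F p.2) * (H p.2 - H p.1)) triangle :=
    triangle.integrableOn_of_bound (by fun_prop) (C := 2 * 2) fun p => by
      rw [abs_mul]
      exact mul_le_mul (abs_one_sub_add_le_two (hF01 _) (hF01 _)) (abs_sub_le_two hH1 _ _)
        (abs_nonneg _) zero_le_two
  have iC := integrableOn_triangle_sub_sq hH hH1
  have iAB : IntegrableOn (fun p : ℝ × ℝ =>
      (1 - F p.1 + F p.2) ^ 2 + 2 * ((1 - F p.1 + F p.2) * (H p.2 - H p.1))) triangle :=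
    iA.add (iB.const_mul 2)
  calc inversionFunctional G
      = ∫ p in triangle, ((1 - F p.1 + F p.2) ^ 2 + 2 * ((1 - F p.1 + F p.2) * (H p.2 - H p.1))
          + (H p.2 - H p.1) ^ 2) := by
        rw [triangle.setIntegral_eq_integral_integral (f := fun p => (1 - F p.1 + F p.2) ^ 2
          + 2 * ((1 - F p.1 + F p.2) * (H p.2 - H p.1)) + (H p.2 - H p.1) ^ 2) (iAB.add iC)]
        refine intervalIntegral.integral_congr fun x _ =>
          intervalIntegral.integral_congr fun y _ => ?_
        simp only [hH_def]; ring
    _ = (∫ p in triangle, (1 - F p.1 + F p.2) ^ 2)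
          + 2 * (∫ p in triangle, (1 - F p.1 + F p.2) * (H p.2 - H p.1))
          + ∫ p in triangle, (H p.2 - H p.1) ^ 2 := by
        rw [integral_add iAB iC, integral_add iA (iB.const_mul 2), integral_const_mul]
    _ = _ := by
        rw [triangle.setIntegral_eq_integral_integral iA,
          setIntegral_triangle_mul_sub hF hF01 hH hH1,
          triangle.setIntegral_eq_integral_integral iC]
        rfl

end Expansion

section Positivity

lemma intervalIntegral_pos_of_pos_on_Ioo {f : ℝ → ℝ} {a b u v : ℝ}
    (hfi : IntervalIntegrable f volume a b) (hf : ∀ x ∈ Ioc a b, 0 ≤ f x) (huv : u < v)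
    (hsub : Ioo u v ⊆ Ioc a b) (hpos : ∀ x ∈ Ioo u v, 0 < f x) :
    0 < ∫ x in a..b, f x := by
  obtain ⟨m, hm⟩ := nonempty_Ioo.2 huv
  have hab : a < b := (hsub hm).1.trans_le (hsub hm).2
  rw [intervalIntegral.integral_pos_iff_support_of_nonneg_ae' ?_ hfi]
  · refine ⟨hab, ?_⟩
    calc (0 : ENNReal) < volume (Ioo u v) := by simp [huv]
      _ ≤ volume (Function.support f ∩ Ioc a b) :=
        measure_mono fun x hx => ⟨(hpos x hx).ne', hsub hx⟩
  · rw [uIoc_of_le hab.le]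
    exact ae_restrict_of_forall_mem measurableSet_Ioc hf

lemma intervalIntegral_pos_of_continuousWithinAt {f : ℝ → ℝ} {a b t : ℝ}
    (hfi : IntervalIntegrable f volume a b) (hf : ∀ x ∈ Ioc a b, 0 ≤ f x) (ht : t ∈ Ico a b)
    (hft : ContinuousWithinAt f (Ici t) t) (hpos : 0 < f t) :
    0 < ∫ x in a..b, f x := by
  obtain ⟨c, hc, hsub⟩ :=
    (mem_nhdsGE_iff_exists_mem_Ioc_Ico_subset ht.2).1 (hft.eventually (lt_mem_nhds hpos))
  exact intervalIntegral_pos_of_pos_on_Ioo hfi hf hc.1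
    (fun x hx => ⟨ht.1.trans_lt hx.1, hx.2.le.trans hc.2⟩)
    fun x hx => hsub (Ioo_subset_Ico_self hx)

lemma integral_integral_sub_sq_pos {H : ℝ → ℝ} (hH : Measurable H) (hH1 : ∀ x, |H x| ≤ 1)
    {t u : ℝ} (ht : 0 ≤ t) (htu : t ≤ u) (hu : u < 1) (hHt : H t ≠ 0)
    (hHr : ContinuousWithinAt H (Ici t) t) (hzero : ∀ x ∈ Ioo u 1, H x = 0) :
    0 < ∫ x in (0:ℝ)..1, ∫ y in (0:ℝ)..x, (H y - H x) ^ 2 := by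
  refine intervalIntegral_pos_of_pos_on_Ioo
    (triangle.intervalIntegrable_integral (integrableOn_triangle_sub_sq hH hH1))
    (fun x hx => intervalIntegral.integral_nonneg hx.1.le fun y _ => sq_nonneg _) hu
    (fun x hx => ⟨ht.trans_lt (htu.trans_lt hx.1), hx.2.le⟩) fun x hx => ?_
  have hx0 : 0 ≤ x := ht.trans (htu.trans hx.1.le)
  refine intervalIntegral_pos_of_continuousWithinAt ?_ (fun y _ => sq_nonneg _)
    ⟨ht, htu.trans_lt hx.1⟩ ((hHr.sub continuousWithinAt_const).pow 2) ?_
  · exact (intervalIntegrable_iff_integrableOn_Ioc_of_le hx0).2 <|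
      IntegrableOn.of_bound measure_Ioc_lt_top (by fun_prop) _
        (ae_of_all _ fun y => abs_sub_sq_le_four hH1 x y)
  · rw [hzero x hx, sub_zero]
    positivity

end Positivity

section G₀

open intervalIntegral

@[fun_prop]
lemma continuous_G₀ : Continuous G₀ := by
  unfold G₀; fun_prop

lemma monotone_G₀ : Monotone G₀ := fun _ _ h => by
  unfold G₀; gcongr

lemma G₀_mem_Icc (x : ℝ) : G₀ x ∈ Icc (0:ℝ) 1 :=
  ⟨le_max_left _ _, max_le zero_le_one (min_le_left _ _)⟩

lemma G₀_of_le {x : ℝ} (h : x ≤ 1/4) : G₀ x = 0 := by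
  unfold G₀; rw [min_eq_right (by linarith), max_eq_left (by linarith)]

lemma G₀_of_mem_Icc {x : ℝ} (h : x ∈ Icc (1/4 : ℝ) (3/4)) : G₀ x = 2 * x - 1/2 := by
  unfold G₀; rw [min_eq_right (by linarith [h.2]), max_eq_right (by linarith [h.1])]

lemma G₀_of_ge {x : ℝ} (h : 3/4 ≤ x) : G₀ x = 1 := by
  unfold G₀; rw [min_eq_left (by linarith), max_eq_right zero_le_one]

lemma integral_congr_Icc {f g : ℝ → ℝ} {a b : ℝ} (hab : a ≤ b) (h : EqOn f g (Icc a b)) :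
    ∫ x in a..b, f x = ∫ x in a..b, g x :=
  integral_congr (by rwa [uIcc_of_le hab])

lemma integral_G₀ : ∫ x in (0:ℝ)..1, G₀ x = 1/2 := by
  have hi (a b : ℝ) : IntervalIntegrable G₀ volume a b := continuous_G₀.intervalIntegrable a b
  have h₁ : ∫ x in (0:ℝ)..1/4, G₀ x = 0 := by
    rw [integral_congr_Icc (by norm_num) fun x hx => G₀_of_le hx.2]; simp
  have h₂ : ∫ x in (1/4:ℝ)..3/4, G₀ x = 1/4 := by
    rw [integral_congr_Icc (by norm_num) fun x hx => G₀_of_mem_Icc hx,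
      integral_comp_mul_sub (fun x => x) (by norm_num)]
    norm_num
  have h₃ : ∫ x in (3/4:ℝ)..1, G₀ x = 1/4 := by
    rw [integral_congr_Icc (by norm_num) fun x hx => G₀_of_ge hx.1]; norm_num
  rw [← integral_add_adjacent_intervals (hi 0 (3/4)) (hi _ _),
    ← integral_add_adjacent_intervals (hi 0 (1/4)) (hi _ _), h₁, h₂, h₃]
  norm_num

lemma intervalIntegrable_sq_G₀ (x a b : ℝ) :
    IntervalIntegrable (fun y => (1 - G₀ x + G₀ y) ^ 2) volume a b :=
  (by fun_prop : Continuous fun y => (1 - G₀ x + G₀ y) ^ 2).intervalIntegrable a b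

lemma integral_sq_G₀_of_le {x : ℝ} (h0 : 0 ≤ x) (h : x ≤ 1/4) :
    ∫ y in (0:ℝ)..x, (1 - G₀ x + G₀ y) ^ 2 = x := by
  rw [integral_congr_Icc h0 (g := fun _ => 1) fun y hy => by
    simp [G₀_of_le h, G₀_of_le (hy.2.trans h)]]
  simp

lemma integral_sq_G₀_of_mem_Icc {x : ℝ} (h : x ∈ Icc (1/4 : ℝ) (3/4)) :
    ∫ y in (0:ℝ)..x, (1 - G₀ x + G₀ y) ^ 2 =
      (3/2 - 2 * x) ^ 2 / 4 + (1 - (3/2 - 2 * x) ^ 3) / 6 := by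
  have h₁ : ∫ y in (0:ℝ)..1/4, (1 - G₀ x + G₀ y) ^ 2 = (3/2 - 2 * x) ^ 2 / 4 := by
    rw [integral_congr_Icc (by norm_num) (g := fun _ => (3/2 - 2 * x) ^ 2) fun y hy => by
      simp only [G₀_of_le hy.2, G₀_of_mem_Icc h]; ring]
    simp; ring
  have h₂ : ∫ y in (1/4:ℝ)..x, (1 - G₀ x + G₀ y) ^ 2 = (1 - (3/2 - 2 * x) ^ 3) / 6 := by
    rw [integral_congr_Icc h.1 (g := fun y => (2 * y + (1 - 2 * x)) ^ 2) fun y hy => by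
        simp only [G₀_of_mem_Icc h, G₀_of_mem_Icc ⟨hy.1, hy.2.trans h.2⟩]; ring,
      integral_comp_mul_add (fun y => y ^ 2) (by norm_num), integral_pow]
    simp; ring
  rw [← integral_add_adjacent_intervals (intervalIntegrable_sq_G₀ x 0 (1/4))
      (intervalIntegrable_sq_G₀ x _ _), h₁, h₂]

lemma integral_sq_G₀_of_ge {x : ℝ} (h : 3/4 ≤ x) :
    ∫ y in (0:ℝ)..x, (1 - G₀ x + G₀ y) ^ 2 = x - 7/12 := by
  have h₁ : ∫ y in (0:ℝ)..1/4, (1 - G₀ x + G₀ y) ^ 2 = 0 := by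
    rw [integral_congr_Icc (by norm_num) (g := fun _ => 0) fun y hy => by
      simp [G₀_of_le hy.2, G₀_of_ge h]]
    simp
  have h₂ : ∫ y in (1/4:ℝ)..3/4, (1 - G₀ x + G₀ y) ^ 2 = 1/6 := by
    rw [integral_congr_Icc (by norm_num) (g := fun y => (2 * y + (-1/2)) ^ 2) fun y hy => by
        simp only [G₀_of_mem_Icc hy, G₀_of_ge h]; ring,
      integral_comp_mul_add (fun y => y ^ 2) (by norm_num), integral_pow]
    norm_num
  have h₃ : ∫ y in (3/4:ℝ)..x, (1 - G₀ x + G₀ y) ^ 2 = x - 3/4 := by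
    rw [integral_congr_Icc h (g := fun _ => 1) fun y hy => by simp [G₀_of_ge hy.1, G₀_of_ge h]]
    simp
  rw [← integral_add_adjacent_intervals (intervalIntegrable_sq_G₀ x 0 (3/4))
      (intervalIntegrable_sq_G₀ x _ _),
    ← integral_add_adjacent_intervals (intervalIntegrable_sq_G₀ x 0 (1/4))
      (intervalIntegrable_sq_G₀ x _ _), h₁, h₂, h₃]
  ring

lemma inversionFunctional_G₀ : inversionFunctional G₀ = 5/24 := by
  set f := fun x => ∫ y in (0:ℝ)..x, (1 - G₀ x + G₀ y) ^ 2
  have hi (a b : ℝ) : IntervalIntegrable f volume a b :=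
    (continuous_parametric_intervalIntegral_of_continuous (by fun_prop)
      continuous_id).intervalIntegrable a b
  have h₁ : ∫ x in (0:ℝ)..1/4, f x = 1/32 := by
    rw [integral_congr_Icc (by norm_num) fun x hx => integral_sq_G₀_of_le hx.1 hx.2]; norm_num
  have h₂ : ∫ x in (1/4:ℝ)..3/4, f x = 5/48 := by
    rw [integral_congr_Icc (by norm_num)
        (g := fun x => (fun u => u ^ 2 / 4 + (1 - u ^ 3) / 6) (-2 * x + 3/2))
        fun x hx => by simp only [f, integral_sq_G₀_of_mem_Icc hx]; ring_nf,
      integral_comp_mul_add (fun u => u ^ 2 / 4 + (1 - u ^ 3) / 6) (by norm_num : (-2:ℝ) ≠ 0),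
      integral_add ((by fun_prop : Continuous fun u : ℝ => u ^ 2 / 4).intervalIntegrable _ _)
        ((by fun_prop : Continuous fun u : ℝ => (1 - u ^ 3) / 6).intervalIntegrable _ _)]
    norm_num [intervalIntegral.integral_div, intervalIntegral.integral_sub]
  have h₃ : ∫ x in (3/4:ℝ)..1, f x = 7/96 := by
    rw [integral_congr_Icc (by norm_num) fun x hx => integral_sq_G₀_of_ge hx.1,
      integral_comp_sub_right (fun x => x)]
    norm_num
  rw [inversionFunctional, ← integral_add_adjacent_intervals (hi 0 (3/4)) (hi _ _),
    ← integral_add_adjacent_intervals (hi 0 (1/4)) (hi _ _), h₁, h₂, h₃]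
  norm_num

lemma inversionWeight_G₀ (t : ℝ) : inversionWeight G₀ t = 1/2 - 2 * t + G₀ t := by
  rw [inversionWeight, integral_G₀]; ring

lemma inversionWeight_G₀_neg {t : ℝ} (h : 3/4 < t) : inversionWeight G₀ t < 0 := by
  rw [inversionWeight_G₀, G₀_of_ge h.le]; linarith

lemma sub_G₀_mul_inversionWeight_nonneg {G : ℝ → ℝ} {t : ℝ} (hG : G t ∈ Icc (0:ℝ) 1) :
    0 ≤ (G t - G₀ t) * inversionWeight G₀ t := by
  rcases le_or_gt t (1/4) with h | h
  · rw [inversionWeight_G₀, G₀_of_le h]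
    exact mul_nonneg (by linarith [hG.1]) (by linarith)
  rcases le_or_gt t (3/4) with h' | h'
  · have hw : inversionWeight G₀ t = 0 := by
      rw [inversionWeight_G₀, G₀_of_mem_Icc ⟨h.le, h'⟩]; ring
    rw [hw, mul_zero]
  · exact mul_nonneg_of_nonpos_of_nonpos (by linarith [hG.2, G₀_of_ge h'.le])
      (inversionWeight_G₀_neg h').le

lemma exists_ne_G₀_of_eqOn_Ioo {G : ℝ → ℝ} (hG : Monotone G) (hG1 : ∀ x, G x ≤ 1)
    (hzero : EqOn G G₀ (Ioo (3/4) 1)) (hne : ∃ x ∈ Icc (0:ℝ) 1, G x ≠ G₀ x) :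
    ∃ t ∈ Icc (0:ℝ) (3/4), G t ≠ G₀ t := by
  obtain ⟨t, ht, hGt⟩ := hne
  refine ⟨t, ⟨ht.1, not_lt.1 fun h => hGt ?_⟩, hGt⟩
  rcases ht.2.lt_or_eq with ht1 | rfl
  · exact hzero ⟨h, ht1⟩
  · have h78 : G (7/8) = 1 := (hzero ⟨by norm_num, by norm_num⟩).trans (G₀_of_ge (by norm_num))
    rw [G₀_of_ge (by norm_num)]
    exact le_antisymm (hG1 1) (h78.ge.trans (hG (by norm_num)))

end G₀

theorem inversionFunctional_G₀_lt {G : ℝ → ℝ} (hG : Monotone G) (hG01 : ∀ x, G x ∈ Icc (0:ℝ) 1)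
    (hGr : ∀ x, ContinuousWithinAt G (Ici x) x) (hne : ∃ x ∈ Icc (0:ℝ) 1, G x ≠ G₀ x) :
    inversionFunctional G₀ < inversionFunctional G := by
  rw [inversionFunctional_eq_add monotone_G₀ hG G₀_mem_Icc hG01]
  set H := fun t => G t - G₀ t
  have hH1 (x : ℝ) : |H x| ≤ 1 := abs_le.2
    ⟨by linarith [(G₀_mem_Icc x).2, (hG01 x).1], by linarith [(G₀_mem_Icc x).1, (hG01 x).2]⟩
  have hw : Continuous (inversionWeight G₀) := by unfold inversionWeight; fun_prop
  have hlin : 0 ≤ ∫ t in (0:ℝ)..1, H t * inversionWeight G₀ t :=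
    intervalIntegral.integral_nonneg zero_le_one fun t _ =>
      sub_G₀_mul_inversionWeight_nonneg (hG01 t)
  have hquad : 0 ≤ ∫ x in (0:ℝ)..1, ∫ y in (0:ℝ)..x, (H y - H x) ^ 2 :=
    intervalIntegral.integral_nonneg zero_le_one fun x hx =>
      intervalIntegral.integral_nonneg hx.1 fun _ _ => sq_nonneg _
  suffices 0 < ∫ t in (0:ℝ)..1, H t * inversionWeight G₀ t ∨
      0 < ∫ x in (0:ℝ)..1, ∫ y in (0:ℝ)..x, (H y - H x) ^ 2 by
    rcases this with h | h <;> linarith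
  by_cases hlin_ne : ∃ t ∈ Ico (0:ℝ) 1, H t * inversionWeight G₀ t ≠ 0
  · obtain ⟨t, ht, hHt⟩ := hlin_ne
    exact Or.inl <| intervalIntegral_pos_of_continuousWithinAt
      ((hG.intervalIntegrable.sub (continuous_G₀.intervalIntegrable 0 1)).mul_continuousOn
        hw.continuousOn)
      (fun s _ => sub_G₀_mul_inversionWeight_nonneg (hG01 s)) ht
      (((hGr t).sub continuous_G₀.continuousWithinAt).mul hw.continuousWithinAt)
      ((sub_G₀_mul_inversionWeight_nonneg (hG01 t)).lt_of_ne' hHt)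
  push Not at hlin_ne
  have hzero : EqOn G G₀ (Ioo (3/4) 1) := fun x hx => sub_eq_zero.1 <|
    (mul_eq_zero.1 (hlin_ne x ⟨by linarith [hx.1], hx.2⟩)).resolve_right
      (inversionWeight_G₀_neg hx.1).ne
  obtain ⟨t, ht, hGt⟩ := exists_ne_G₀_of_eqOn_Ioo hG (fun x => (hG01 x).2) hzero hne
  exact Or.inr <| integral_integral_sub_sq_pos (hG.measurable.sub continuous_G₀.measurable) hH1
    ht.1 ht.2 (by norm_num) (sub_ne_zero.2 hGt) ((hGr t).sub continuous_G₀.continuousWithinAt)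
    fun x hx => sub_eq_zero.2 (hzero hx)

theorem stmt_3_general (G : ℝ → ℝ) (μ : Measure ℝ) [IsProbabilityMeasure μ]
    (hG : ∀ x, G x = (μ (Iic x)).toReal)
    (hne : ∃ x ∈ Icc (0:ℝ) 1, G x ≠ G₀ x) :
    (∫ x in (0:ℝ)..1, ∫ y in (0:ℝ)..x, (1 - G₀ x + G₀ y) ^ 2) = 5 / 24 ∧
    (∫ x in (0:ℝ)..1, ∫ y in (0:ℝ)..x, (1 - G x + G y) ^ 2) > 5 / 24 := by
  obtain rfl : G = ProbabilityTheory.cdf μ :=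
    funext fun x => by rw [hG, ProbabilityTheory.cdf_eq_real, measureReal_def]
  refine ⟨inversionFunctional_G₀, inversionFunctional_G₀ ▸ ?_⟩
  exact inversionFunctional_G₀_lt (ProbabilityTheory.monotone_cdf μ)
    (fun x => ⟨ProbabilityTheory.cdf_nonneg μ x, ProbabilityTheory.cdf_le_one μ x⟩)
    (ProbabilityTheory.cdf μ).right_continuous hne

/-- The uniform distribution on `[1/4, 3/4]` is the unique minimizer of the inversion
functional `I(G) = ∫₀¹ ∫₀ˣ (1 - G(x) + G(y))² dy dx` over cdfs of probability
distributions on `[0,1]`: any cdf `G` differing from `G₀` has `I(G) > I(G₀) = 5/24`. -/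
theorem stmt_3 (G : ℝ → ℝ) (μ : Measure ℝ) [IsProbabilityMeasure μ]
    (hsupp : μ (Icc (0:ℝ) 1) = 1) (hG : ∀ x, G x = (μ (Iic x)).toReal)
    (hne : ∃ x ∈ Icc (0:ℝ) 1, G x ≠ G₀ x) :
    (∫ x in (0:ℝ)..1, ∫ y in (0:ℝ)..x, (1 - G₀ x + G₀ y) ^ 2) = 5 / 24 ∧
    (∫ x in (0:ℝ)..1, ∫ y in (0:ℝ)..x, (1 - G x + G y) ^ 2) > 5 / 24 :=
  stmt_3_general G μ hG hne
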